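/- Let W be a real vector space of dimension 2n with n ≥ 1, let θ, τ ∈ W* be linearly independent linear functionals, and let ω' be an alternating bilinear form on W whose restriction to the codimension-two subspace ker θ ∩ ker τ is nondegenerate. Then there exists K₀ ∈ ℝ such that for all K ≥ K₀ the alternating bilinear form ω' + K·(θ ∧ τ) is nondegenerate on W. (This is the linear-algebraic content of Thurston's trick used to build cosymplectic cobordisms between cohomologous cosymplectic structures.) -/
import Mathlib
set_option maxHeartbeats 1000000

open Module

private lemma upd0 {W : Type*} (u w x : W) : Function.update ![u, w] 0 x = ![x, w] := by
  funext i; fin_cases i <;> simp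
private lemma upd1 {W : Type*} (u w x : W) : Function.update ![u, w] 1 x = ![u, x] := by
  funext i; fin_cases i <;> simp

private lemma det_pos (p q r s K : ℝ) (hK : |r - q| + |p * s - q * r| + 1 ≤ K) :
    0 < K ^ 2 + (r - q) * K + (p * s - q * r) := by
  have h1 := le_abs_self (r - q)
  have h2 := neg_abs_le (r - q)
  have h3 := le_abs_self (p * s - q * r)
  have h4 := neg_abs_le (p * s - q * r)
  have habs1 : (0:ℝ) ≤ |r - q| := abs_nonneg _
  have habs2 : (0:ℝ) ≤ |p * s - q * r| := abs_nonneg _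
  nlinarith [sq_nonneg (K - |r - q|), sq_nonneg K]

/-- **Thurston's trick, linear algebra.** Let `W` be a `2n`-dimensional real
vector space, `θ, τ ∈ W*` linearly independent functionals, and `ω'` an alternating bilinear
form whose restriction to `ker θ ∩ ker τ` is nondegenerate. Then for every sufficiently large
`K` the form `ω' + K·(θ ∧ τ)` is nondegenerate on `W`. -/
theorem thurston_trick
    {W : Type*} [AddCommGroup W] [Module ℝ W] [FiniteDimensional ℝ W]
    {n : ℕ} (hn : 1 ≤ n) (hdim : Module.finrank ℝ W = 2 * n)
    (θ τ : W →ₗ[ℝ] ℝ) (hind : LinearIndependent ℝ ![θ, τ])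
    (ω' : W [⋀^Fin 2]→ₗ[ℝ] ℝ)
    (hres : ∀ u ∈ LinearMap.ker θ ⊓ LinearMap.ker τ, u ≠ 0 →
      ∃ w ∈ LinearMap.ker θ ⊓ LinearMap.ker τ, ω' ![u, w] ≠ 0) :
    ∃ K₀ : ℝ, ∀ K ≥ K₀, ∀ u : W, u ≠ 0 →
      ∃ w : W, ω' ![u, w] + K * (θ u * τ w - θ w * τ u) ≠ 0 := by
  classical
  -- bilinear version of ω'
  set B : W →ₗ[ℝ] W →ₗ[ℝ] ℝ := LinearMap.mk₂ ℝ (fun u w => ω' ![u, w])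
    (fun u u' w => by
      have h := ω'.map_update_add ![u, w] 0 u u'
      simpa [upd0] using h)
    (fun c u w => by
      have h := ω'.map_update_smul ![u, w] 0 c u
      simpa [upd0] using h)
    (fun u w w' => by
      have h := ω'.map_update_add ![u, w] 1 w w'
      simpa [upd1] using h)
    (fun c u w => by
      have h := ω'.map_update_smul ![u, w] 1 c w
      simpa [upd1] using h) with hB
  have hBapp : ∀ u w : W, B u w = ω' ![u, w] := fun u w => rfl
  -- get e, f with θ e = 1, τ e = 0, θ f = 0, τ f = 1
  obtain ⟨hτ, hθτ⟩ := linearIndependent_fin2.mp hind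
  simp only [Matrix.cons_val_one, Matrix.head_cons, Matrix.cons_val_zero] at hτ hθτ
  -- τ ≠ 0, so pick f₀ with τ f₀ = 1
  obtain ⟨x, hx⟩ : ∃ x, τ x ≠ 0 := by
    by_contra h; push_neg at h; exact hτ (by ext y; simp [h y])
  set f₀ : W := (τ x)⁻¹ • x with hf₀
  have hτf₀ : τ f₀ = 1 := by simp [hf₀, inv_mul_cancel₀ hx]
  -- θ does not vanish on ker τ
  obtain ⟨e₀, he₀τ, he₀θ⟩ : ∃ e₀, τ e₀ = 0 ∧ θ e₀ ≠ 0 := by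
    by_contra h; push_neg at h
    apply hθτ (θ f₀)
    ext y
    have : τ (y - τ y • f₀) = 0 := by simp [hτf₀]
    have h2 := h (y - τ y • f₀) this
    simp only [map_sub, map_smul, sub_eq_zero] at h2
    simp only [LinearMap.smul_apply, smul_eq_mul]
    rw [h2, smul_eq_mul]; ring
  set e : W := (θ e₀)⁻¹ • e₀ with he
  have hθe : θ e = 1 := by simp [he, inv_mul_cancel₀ he₀θ]
  have hτe : τ e = 0 := by simp [he, he₀τ]
  set f : W := f₀ - θ f₀ • e with hf
  have hθf : θ f = 0 := by simp [hf, hθe]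
  have hτf : τ f = 1 := by simp [hf, hτe, hτf₀]
  -- the subspace V
  let V : Submodule ℝ W := LinearMap.ker θ ⊓ LinearMap.ker τ
  -- the restricted form is injective hence surjective onto the dual
  set φ : V →ₗ[ℝ] Module.Dual ℝ V := B.compl₁₂ V.subtype V.subtype with hφ
  have hφinj : Function.Injective φ := by
    rw [← LinearMap.ker_eq_bot]
    rw [LinearMap.ker_eq_bot']
    intro v hv
    by_contra hv0
    obtain ⟨w, hwV, hw⟩ := hres v.1 v.2 (fun h => hv0 (Subtype.ext h))
    apply hw
    have := LinearMap.congr_fun hv ⟨w, hwV⟩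
    simpa [hφ, hBapp] using this
  have hφsurj : Function.Surjective φ :=
    (LinearMap.injective_iff_surjective_of_finrank_eq_finrank
      (Subspace.dual_finrank_eq).symm).mp hφinj
  obtain ⟨E, hE⟩ := hφsurj ((B e).comp V.subtype)
  obtain ⟨F, hF⟩ := hφsurj ((B f).comp V.subtype)
  have hE' : ∀ w ∈ V, B (E : W) w = B e w := by
    intro w hw
    have := LinearMap.congr_fun hE ⟨w, hw⟩
    simpa [hφ] using this
  have hF' : ∀ w ∈ V, B (F : W) w = B f w := by
    intro w hw
    have := LinearMap.congr_fun hF ⟨w, hw⟩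
    simpa [hφ] using this
  -- the constants
  set p : ℝ := B e e - B (E : W) e with hp
  set q : ℝ := B f e - B (F : W) e with hq
  set r : ℝ := B e f - B (E : W) f with hr
  set s : ℝ := B f f - B (F : W) f with hs
  refine ⟨|r - q| + |p * s - q * r| + 1, fun K hK u hu => ?_⟩
  by_contra hcon
  push_neg at hcon
  set a : ℝ := θ u with ha
  set b : ℝ := τ u with hb
  -- show u = a • (e - E) + b • (f - F)
  set z : W := u - a • e - b • f + a • (E : W) + b • (F : W) with hz
  have hEV : θ (E : W) = 0 ∧ τ (E : W) = 0 := Submodule.mem_inf.mp E.2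
  have hFV : θ (F : W) = 0 ∧ τ (F : W) = 0 := Submodule.mem_inf.mp F.2
  have hzV : z ∈ V := by
    refine Submodule.mem_inf.mpr ⟨LinearMap.mem_ker.mpr ?_, LinearMap.mem_ker.mpr ?_⟩ <;>
      simp [hz, hθe, hτe, hθf, hτf, hEV.1, hEV.2, hFV.1, hFV.2, ← ha, ← hb]
  have hzB : ∀ w ∈ V, B z w = 0 := by
    intro w hw
    have hwθ : θ w = 0 := (Submodule.mem_inf.mp hw).1
    have hwτ : τ w = 0 := (Submodule.mem_inf.mp hw).2
    have huw : B u w = 0 := by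
      have h := hcon w
      rw [hwθ, hwτ] at h
      rw [hBapp]
      linear_combination h
    simp only [hz, map_add, map_sub, map_smul, LinearMap.add_apply, LinearMap.sub_apply,
      LinearMap.smul_apply, smul_eq_mul, huw, hE' w hw, hF' w hw]
    ring
  have hz0 : z = 0 := by
    by_contra hz0
    obtain ⟨w, hwV, hw⟩ := hres z hzV hz0
    exact hw (by rw [← hBapp]; exact hzB w hwV)
  have hu' : u = a • e + b • f - a • (E : W) - b • (F : W) := by
    have : u - (a • e + b • f - a • (E : W) - b • (F : W)) = z := by rw [hz]; abel
    rw [← sub_eq_zero, this, hz0]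
  -- the two equations
  have hcone := hcon e
  have hconf := hcon f
  rw [← hBapp, hθe, hτe] at hcone
  rw [← hBapp, hθf, hτf] at hconf
  have hBue : B u e = a * p + b * q := by
    rw [hu']; simp only [map_add, map_sub, map_smul, LinearMap.add_apply, LinearMap.sub_apply,
      LinearMap.smul_apply, smul_eq_mul, hp, hq]; ring
  have hBuf : B u f = a * r + b * s := by
    rw [hu']; simp only [map_add, map_sub, map_smul, LinearMap.add_apply, LinearMap.sub_apply,
      LinearMap.smul_apply, smul_eq_mul, hr, hs]; ring
  have eq1 : a * p + b * q - K * b = 0 := by rw [← hBue]; linarith [hcone]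
  have eq2 : a * r + b * s + K * a = 0 := by rw [← hBuf]; linarith [hconf]
  -- the determinant is positive
  set D : ℝ := K ^ 2 + (r - q) * K + (p * s - q * r) with hD
  have hDpos : 0 < D := hD ▸ det_pos p q r s K hK
  have haD : a * D = 0 := by rw [hD]; linear_combination s * eq1 - (q - K) * eq2
  have hbD : b * D = 0 := by rw [hD]; linear_combination -(r + K) * eq1 + p * eq2
  have ha0 : a = 0 := by
    rcases mul_eq_zero.mp haD with h | h
    · exact h
    · exact absurd h hDpos.ne'
  have hb0 : b = 0 := by
    rcases mul_eq_zero.mp hbD with h | h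
    · exact h
    · exact absurd h hDpos.ne'
  apply hu
  rw [hu', ha0, hb0]
  simp
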